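/- arXiv:2507.10514 — 4 statements merged into one kernel-verified Lean document; each statement's English description precedes it below -/
import Mathlib

section
/- Define the half-return map Π_X(x,y) = (x − (3(x+c) − √(9(x+c)²−24y))/2, (x+c)(3(x+c) − √(9(x+c)²−24y))/4 − 2y) for points with 9(x+c)² − 24y ≥ 0. Then Π_X(x,y) = φ_X(t_−, (x,y,0)) projected to the first two coordinates, where t_− = (3(x+c) − √(9(x+c)²−24y))/2 and φ_X is the flow of X(x,y,z) = (-1,-(x+c),y). -/
/-- The half-return map `Π_X` equals the first two coordinates of the flow of
`X(x,y,z) = (-1,-(x+c),y)` at time `t₋ = (3(x+c) − √(9(x+c)²−24y))/2`. -/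
theorem half_return_map_cusp (c x y : ℝ) (h : 9*(x+c)^2 - 24*y ≥ 0) :
    let tm := (3*(x+c) - Real.sqrt (9*(x+c)^2 - 24*y))/2
    let φ : ℝ → ℝ × ℝ × ℝ := fun t =>
      (x - t,
       (x - t)^2/2 - c*t - x^2/2 + y,
       -(x - t)^3/6 - c*t^2/2 + (x^2/2 + y)*t + x^3/6)
    (x - (3*(x+c) - Real.sqrt (9*(x+c)^2 - 24*y))/2,
     (x+c)*(3*(x+c) - Real.sqrt (9*(x+c)^2 - 24*y))/4 - 2*y)
      = ((φ tm).1, (φ tm).2.1) := by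
  intro tm φ
  have hs : Real.sqrt (9*(x+c)^2 - 24*y) ^ 2 = 9*(x+c)^2 - 24*y := Real.sq_sqrt h
  simp only [φ, tm, Prod.mk.injEq]
  constructor
  · trivial
  · nlinarith [hs]
end

section
/- For the piecewise system with Y(x,y,z) = (−1,−β,−x−by) (z<0) and X(x,y,z) = (1,x+α,−y) (z>0), if b ≠ 0 and 1+bβ > 0, then for each t > 0 the system of closing equations (x₁,y₁) = P₋(x₀,y₀), (x₀,y₀) = P₊(t,x₁,y₁), g(t,x₁,y₁) = 0 has the one-parameter family of solutions x₁ = −t(6+bt)/12, y₁ = t(t−6β)/12, x₀ = t(6−bt)/12, y₀ = t(t+6β)/12, α = bt²/12 + β. -/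
/-- If `b ≠ 0` and `1+bβ > 0`, then for each `t > 0` the closing equations
`(x₁,y₁) = P₋(x₀,y₀)`, `(x₀,y₀) = P₊(t,x₁,y₁)`, `g(t,x₁,y₁) = 0` are satisfied by
`x₁ = −t(6+bt)/12`, `y₁ = t(t−6β)/12`, `x₀ = t(6−bt)/12`, `y₀ = t(t+6β)/12`,
`α = bt²/12 + β`. -/
theorem closing_equations_solution (b β t : ℝ) (hb : b ≠ 0) (h1 : 1 + b*β > 0)
    (ht : t > 0) :
    let x1 : ℝ := -t*(6 + b*t)/12
    let y1 : ℝ := t*(t - 6*β)/12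
    let x0 : ℝ := t*(6 - b*t)/12
    let y0 : ℝ := t*(t + 6*β)/12
    let α : ℝ := b*t^2/12 + β
    (x1, y1) = (((b*β - 1)*x0 - 2*b*y0)/(1 + b*β), (-2*β*x0 + (1 - b*β)*y0)/(1 + b*β)) ∧
    (x0, y0) = (t + x1, (t^2 + 2*(x1 + α)*t + 2*y1)/2) ∧
    -t^2 - 3*t*(x1 + α) - 6*y1 = 0 := by
  have h1' : 1 + b*β ≠ 0 := ne_of_gt h1
  have h1'' : 1 + β*b ≠ 0 := by rwa [mul_comm]
  refine ⟨?_, ?_, by ring⟩ <;> simp only [Prod.mk.injEq] <;> constructor <;> field_simp <;> ring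
end

section
/- With the family of solutions x₁ = −t(6+bt)/12, y₁ = t(t−6β)/12, x₀ = t(6−bt)/12, y₀ = t(t+6β)/12, the crossing conditions y₀ > 0, x₀ + by₀ > 0, y₁ < 0, x₁ + by₁ < 0 hold for a given t > 0 if and only if β > 0, 1 + bβ > 0 and 0 < t < 6β. -/
/-- With `x₁ = −t(6+bt)/12`, `y₁ = t(t−6β)/12`, `x₀ = t(6−bt)/12`, `y₀ = t(t+6β)/12`,
the crossing conditions `y₀ > 0`, `x₀+by₀ > 0`, `y₁ < 0`, `x₁+by₁ < 0` hold for a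
given `t > 0` iff `β > 0`, `1+bβ > 0` and `0 < t < 6β`. -/
theorem crossing_conditions (b β t : ℝ) (ht : t > 0) :
    let x1 : ℝ := -t*(6 + b*t)/12
    let y1 : ℝ := t*(t - 6*β)/12
    let x0 : ℝ := t*(6 - b*t)/12
    let y0 : ℝ := t*(t + 6*β)/12
    (y0 > 0 ∧ x0 + b*y0 > 0 ∧ y1 < 0 ∧ x1 + b*y1 < 0) ↔
      (β > 0 ∧ 1 + b*β > 0 ∧ t < 6*β) := by
  intro x1 y1 x0 y0
  unfold x1 y1 x0 y0
  constructor
  · rintro ⟨h1, h2, h3, h4⟩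
    refine ⟨?_, ?_, ?_⟩ <;> nlinarith [mul_pos ht ht]
  · rintro ⟨h1, h2, h3⟩
    refine ⟨?_, ?_, ?_, ?_⟩ <;> nlinarith [mul_pos ht h2]
end

section
/- Let J be a 2×2 real matrix with determinant δ and trace τ where δ − τ + 1 = −4bt²/((t+6β)(1+bβ)) and δ + τ + 1 = 4(bt² + 6bβ² + 6β)/((t+6β)(1+bβ)), with t ∈ (0,6β), β > 0, 1+bβ > 0. If b > 0 then δ − τ + 1 < 0, so J has two real eigenvalues λ₁ < 1 < λ₂ (fixed point is a saddle). If b < 0 and bt² + 6bβ² + 6β < 0 then δ + τ + 1 < 0, so J has a real eigenvalue less than −1 (saddle with negative eigenvalues). -/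
lemma quad_factor (τ δ : ℝ) (h : 0 ≤ τ^2 - 4*δ) :
    ∀ l : ℝ, l^2 - τ*l + δ =
      (l - (τ - Real.sqrt (τ^2 - 4*δ))/2) * (l - (τ + Real.sqrt (τ^2 - 4*δ))/2) := by
  intro l
  have hs := Real.sq_sqrt h
  nlinarith [hs]

/-- Let `J` be a 2×2 real matrix with determinant `δ` and trace `τ` satisfying the
given formulas at a crossing limit cycle. If `b > 0` then `δ − τ + 1 < 0` and the
characteristic polynomial has real roots `λ₁ < 1 < λ₂` (saddle). If `b < 0` and
`bt² + 6bβ² + 6β < 0` then `δ + τ + 1 < 0` and there is a real eigenvalue `< −1`. -/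
theorem CLC_stability (b β t δ τ : ℝ) (J : Matrix (Fin 2) (Fin 2) ℝ)
    (hβ : β > 0) (ht : t ∈ Set.Ioo 0 (6*β)) (h1 : 1 + b*β > 0)
    (hdet : J.det = δ) (htr : J.trace = τ)
    (h2 : δ - τ + 1 = -4*b*t^2/((t + 6*β)*(1 + b*β)))
    (h3 : δ + τ + 1 = 4*(b*t^2 + 6*b*β^2 + 6*β)/((t + 6*β)*(1 + b*β))) :
    (b > 0 → δ - τ + 1 < 0 ∧
      ∃ l1 l2 : ℝ, l1 < 1 ∧ 1 < l2 ∧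
        ∀ l : ℝ, l^2 - τ*l + δ = (l - l1)*(l - l2)) ∧
    (b < 0 → b*t^2 + 6*b*β^2 + 6*β < 0 → δ + τ + 1 < 0 ∧
      ∃ l1 l2 : ℝ, l1 < -1 ∧
        ∀ l : ℝ, l^2 - τ*l + δ = (l - l1)*(l - l2)) := by
  obtain ⟨ht0, ht6⟩ := ht
  have hden : (t + 6*β)*(1 + b*β) > 0 := by positivity
  constructor
  · intro hb
    have hneg : δ - τ + 1 < 0 := by
      rw [h2]
      apply div_neg_of_neg_of_pos _ hden
      nlinarith [mul_pos hb (pow_pos ht0 2)]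
    have hD : 0 ≤ τ^2 - 4*δ := by nlinarith [sq_nonneg (τ - 2)]
    set s := Real.sqrt (τ^2 - 4*δ) with hs
    have hsnn : 0 ≤ s := Real.sqrt_nonneg _
    have hfac := quad_factor τ δ hD
    refine ⟨hneg, (τ - s)/2, (τ + s)/2, ?_, ?_, hfac⟩
    · have h1' := hfac 1
      nlinarith
    · have h1' := hfac 1
      nlinarith
  · intro hb hnum
    have hneg : δ + τ + 1 < 0 := by
      rw [h3]
      apply div_neg_of_neg_of_pos _ hden
      nlinarith
    have hD : 0 ≤ τ^2 - 4*δ := by nlinarith [sq_nonneg (τ + 2)]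
    set s := Real.sqrt (τ^2 - 4*δ) with hs
    have hsnn : 0 ≤ s := Real.sqrt_nonneg _
    have hfac := quad_factor τ δ hD
    refine ⟨hneg, (τ - s)/2, (τ + s)/2, ?_, hfac⟩
    have h1' := hfac (-1)
    nlinarith
end
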